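/- arXiv:1305.3905 — 5 statements merged into one kernel-verified Lean document; each statement's English description precedes it below -/
import Mathlib

section
/- Let X, Y, Z be random variables taking values in finite sets such that X - Y - Z form a Markov chain (X and Z are conditionally independent given Y), and let f : G × 𝒵 → ℝ be any function where G is a finite set. Then the minimum over all functions g : 𝒳 × 𝒴 → G of E[f(g(X,Y), Z)] equals the minimum over all functions g : 𝒴 → G of E[f(g(Y), Z)]. -/
/-!
Given `Y = y`, the Markov property factors the joint mass of `(X, Z)` as
`P(X = x, Y = y, Z = z) = P(X = x | Y = y) · P(Y = y, Z = z)`. Hence, for each `y`, the expected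
loss of any rule `g(·, y)` is a nonnegative combination, over `x`, of the losses
`∑_z P(Y = y, Z = z) f(c, z)` of constant decisions `c`, and is therefore at least the loss of the
minimising constant `g₀(y)`. So the rule `g₀` that only looks at `Y` is already optimal.
-/

open Finset

theorem eq_div_mul_of_mul_eq {a b c d : ℝ} (h : a * d = b * c) (ha : d = 0 → a = 0) :
    a = b / d * c := by
  rcases eq_or_ne d 0 with hd | hd
  · simp [ha hd, hd]
  · rw [div_mul_eq_mul_div, eq_div_iff hd, h]

theorem sum_sum_mul_le_of_eq_mul {𝒳 𝒵 G : Type*} [Fintype 𝒳] [Fintype 𝒵]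
    {q : 𝒳 → 𝒵 → ℝ} {w : 𝒳 → ℝ} {r : 𝒵 → ℝ} (f : G × 𝒵 → ℝ) {c₀ : G} (g : 𝒳 → G)
    (hq : ∀ x z, q x z = w x * r z) (hw : ∀ x, 0 ≤ w x)
    (hc₀ : ∀ c, ∑ z, r z * f (c₀, z) ≤ ∑ z, r z * f (c, z)) :
    ∑ x, ∑ z, q x z * f (c₀, z) ≤ ∑ x, ∑ z, q x z * f (g x, z) := by
  have factor : ∀ x c, ∑ z, q x z * f (c, z) = w x * ∑ z, r z * f (c, z) := fun x c => by
    simp only [hq, mul_sum, mul_assoc]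
  simp only [factor]
  exact sum_le_sum fun x _ => mul_le_mul_of_nonneg_left (hc₀ _) (hw x)

section
variable {Ω 𝒳 𝒴 𝒵 : Type*} [Fintype Ω] [DecidableEq 𝒳] [DecidableEq 𝒴] [DecidableEq 𝒵]

theorem sum_mul_eq_sum_sum_sum_mass [Fintype 𝒳] [Fintype 𝒴] [Fintype 𝒵]
    (p : Ω → ℝ) (X : Ω → 𝒳) (Y : Ω → 𝒴) (Z : Ω → 𝒵) (F : 𝒳 → 𝒴 → 𝒵 → ℝ) :
    ∑ ω, p ω * F (X ω) (Y ω) (Z ω)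
      = ∑ y, ∑ x, ∑ z, (∑ ω with X ω = x ∧ Y ω = y ∧ Z ω = z, p ω) * F x y z := by
  rw [← sum_fiberwise univ (fun ω => (Y ω, X ω, Z ω))]
  simp only [Fintype.sum_prod_type, sum_mul, Prod.mk.injEq]
  refine sum_congr rfl fun y _ => sum_congr rfl fun x _ => sum_congr rfl fun z _ => ?_
  refine sum_congr (filter_congr fun ω _ => and_left_comm) fun ω hω => ?_
  obtain ⟨rfl, rfl, rfl⟩ := (mem_filter.1 hω).2
  rfl

theorem mass_eq_div_mul_of_markov {p : Ω → ℝ} (hp : ∀ ω, 0 ≤ p ω)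
    {X : Ω → 𝒳} {Y : Ω → 𝒴} {Z : Ω → 𝒵} {x : 𝒳} {y : 𝒴} {z : 𝒵}
    (hMarkov : (∑ ω with X ω = x ∧ Y ω = y ∧ Z ω = z, p ω) * (∑ ω with Y ω = y, p ω)
      = (∑ ω with X ω = x ∧ Y ω = y, p ω) * (∑ ω with Y ω = y ∧ Z ω = z, p ω)) :
    ∑ ω with X ω = x ∧ Y ω = y ∧ Z ω = z, p ω
      = (∑ ω with X ω = x ∧ Y ω = y, p ω) / (∑ ω with Y ω = y, p ω)
        * ∑ ω with Y ω = y ∧ Z ω = z, p ω := by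
  -- if `P(Y = y) = 0`, the right side is `0` by `b / 0 = 0`, and so is the mass of the subevent
  refine eq_div_mul_of_mul_eq hMarkov fun hY => le_antisymm ?_ (sum_nonneg fun ω _ => hp ω)
  refine hY ▸ sum_le_sum_of_subset_of_nonneg (fun ω => ?_) fun ω _ _ => hp ω
  simp only [mem_filter]
  exact fun h => ⟨h.1, h.2.2.1⟩

end

theorem stmt_0_general {Ω 𝒳 𝒴 𝒵 G : Type} [Fintype Ω] [Fintype 𝒳] [Fintype 𝒴] [Fintype 𝒵]
    [Fintype G] [Nonempty G] [DecidableEq 𝒳] [DecidableEq 𝒴] [DecidableEq 𝒵]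
    (p : Ω → ℝ) (hp : ∀ ω, 0 ≤ p ω)
    (X : Ω → 𝒳) (Y : Ω → 𝒴) (Z : Ω → 𝒵)
    (hMarkov : ∀ (x : 𝒳) (y : 𝒴) (z : 𝒵),
      (∑ ω ∈ Finset.univ.filter (fun ω => X ω = x ∧ Y ω = y ∧ Z ω = z), p ω) *
        (∑ ω ∈ Finset.univ.filter (fun ω => Y ω = y), p ω)
      = (∑ ω ∈ Finset.univ.filter (fun ω => X ω = x ∧ Y ω = y), p ω) *
        (∑ ω ∈ Finset.univ.filter (fun ω => Y ω = y ∧ Z ω = z), p ω))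
    (f : G × 𝒵 → ℝ) :
    (⨅ g : 𝒳 × 𝒴 → G, ∑ ω, p ω * f (g (X ω, Y ω), Z ω))
      = ⨅ g : 𝒴 → G, ∑ ω, p ω * f (g (Y ω), Z ω) := by
  choose g₀ hg₀ using fun y =>
    Finite.exists_min fun c => ∑ z, (∑ ω with Y ω = y ∧ Z ω = z, p ω) * f (c, z)
  have g₀_le : ∀ g : 𝒳 × 𝒴 → G,
      ∑ ω, p ω * f (g₀ (Y ω), Z ω) ≤ ∑ ω, p ω * f (g (X ω, Y ω), Z ω) := fun g => by
    rw [sum_mul_eq_sum_sum_sum_mass p X Y Z fun _ y z => f (g₀ y, z),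
      sum_mul_eq_sum_sum_sum_mass p X Y Z fun x y z => f (g (x, y), z)]
    exact sum_le_sum fun y _ => sum_sum_mul_le_of_eq_mul f (fun x => g (x, y))
      (fun x z => mass_eq_div_mul_of_markov hp (hMarkov x y z))
      (fun x => div_nonneg (sum_nonneg fun ω _ => hp ω) (sum_nonneg fun ω _ => hp ω)) (hg₀ y)
  refine le_antisymm (le_ciInf fun g => ?_) (le_ciInf fun g => ?_)
  · exact ciInf_le (Finite.bddBelow_range _) fun xy : 𝒳 × 𝒴 => g xy.2
  · exact (ciInf_le (Finite.bddBelow_range _) g₀).trans (g₀_le g)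

/-- If `X - Y - Z` is a Markov chain (finite-valued random variables on a
finite probability space), then for any function `f : G × 𝒵 → ℝ`,
`min_{g : 𝒳 × 𝒴 → G} E[f(g(X,Y), Z)] = min_{g : 𝒴 → G} E[f(g(Y), Z)]`. -/
theorem stmt_0 {Ω 𝒳 𝒴 𝒵 G : Type} [Fintype Ω] [Fintype 𝒳] [Fintype 𝒴] [Fintype 𝒵]
    [Fintype G] [Nonempty G] [DecidableEq 𝒳] [DecidableEq 𝒴] [DecidableEq 𝒵]
    (p : Ω → ℝ) (hp : ∀ ω, 0 ≤ p ω) (hps : ∑ ω, p ω = 1)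
    (X : Ω → 𝒳) (Y : Ω → 𝒴) (Z : Ω → 𝒵)
    (hMarkov : ∀ (x : 𝒳) (y : 𝒴) (z : 𝒵),
      (∑ ω ∈ Finset.univ.filter (fun ω => X ω = x ∧ Y ω = y ∧ Z ω = z), p ω) *
        (∑ ω ∈ Finset.univ.filter (fun ω => Y ω = y), p ω)
      = (∑ ω ∈ Finset.univ.filter (fun ω => X ω = x ∧ Y ω = y), p ω) *
        (∑ ω ∈ Finset.univ.filter (fun ω => Y ω = y ∧ Z ω = z), p ω))
    (f : G × 𝒵 → ℝ) :
    (⨅ g : 𝒳 × 𝒴 → G, ∑ ω, p ω * f (g (X ω, Y ω), Z ω))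
      = ⨅ g : 𝒴 → G, ∑ ω, p ω * f (g (Y ω), Z ω) :=
  stmt_0_general p hp X Y Z hMarkov f
end

section
/- For any random variables X_1, …, X_n and Y on finite alphabets, and any positive integer d, the inequality d · I(X^n ; Y) ≥ Σ_{i=1}^n I(X_i ; Y | X^{i−d}) holds, where X^{i−d} denotes (X_1, …, X_{i−d}) (the empty tuple when i ≤ d). -/
/-- Probability that the random variable `A` equals `a`, under pmf `p` on a finite space. -/
noncomputable def prb {Ω α : Type} [Fintype Ω] [DecidableEq α]
    (p : Ω → ℝ) (A : Ω → α) (a : α) : ℝ :=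
  ∑ ω ∈ Finset.univ.filter (fun ω => A ω = a), p ω

/-- Shannon entropy of a finite-valued random variable. -/
noncomputable def ent {Ω α : Type} [Fintype Ω] [Fintype α] [DecidableEq α]
    (p : Ω → ℝ) (A : Ω → α) : ℝ :=
  -∑ a, prb p A a * Real.log (prb p A a)

/-- Mutual information `I(A;B) = H(A) + H(B) − H(A,B)`. -/
noncomputable def mutInfo {Ω α β : Type} [Fintype Ω] [Fintype α] [Fintype β]
    [DecidableEq α] [DecidableEq β] (p : Ω → ℝ) (A : Ω → α) (B : Ω → β) : ℝ :=
  ent p A + ent p B - ent p (fun ω => (A ω, B ω))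

/-- Conditional mutual information `I(A;B|C) = H(A,C) + H(B,C) − H(A,B,C) − H(C)`. -/
noncomputable def condMutInfo {Ω α β γ : Type} [Fintype Ω] [Fintype α] [Fintype β] [Fintype γ]
    [DecidableEq α] [DecidableEq β] [DecidableEq γ]
    (p : Ω → ℝ) (A : Ω → α) (B : Ω → β) (C : Ω → γ) : ℝ :=
  ent p (fun ω => (A ω, C ω)) + ent p (fun ω => (B ω, C ω))
    - ent p (fun ω => (A ω, B ω, C ω)) - ent p C

/-!
Write `a m = I(X^m ; Y)`. Nonnegativity of conditional mutual information gives, for any `A`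
and `C` that are functions of `B`, the bound `I(A ; Y | C) ≤ I(B ; Y) - I(C ; Y)`. With
`B = X^i` this bounds the `i`-th term by `a i - a (i - d)` and makes `a` monotone. Each such
difference is a sum of `d` consecutive increments of `a`, so the whole sum is at most
`d (a n - a 0) = d I(X^n ; Y)`.
-/

open Finset

section Entropy

variable {Ω α β γ δ : Type} [Fintype Ω] {p : Ω → ℝ}

lemma prb_nonneg [DecidableEq α] (hp : ∀ ω, 0 ≤ p ω) (A : Ω → α) (a : α) : 0 ≤ prb p A a :=
  sum_nonneg fun ω _ => hp ω

lemma le_prb_self [DecidableEq α] (hp : ∀ ω, 0 ≤ p ω) (A : Ω → α) (ω : Ω) :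
    p ω ≤ prb p A (A ω) :=
  single_le_sum (fun ω _ => hp ω) (by simp)

lemma sum_prb_mul [Fintype α] [DecidableEq α] (A : Ω → α) (F : α → ℝ) :
    ∑ a, prb p A a * F a = ∑ ω, p ω * F (A ω) := by
  simp only [prb, sum_mul]
  rw [← sum_fiberwise univ A (fun ω => p ω * F (A ω))]
  refine sum_congr rfl fun a _ => sum_congr rfl fun ω hω => ?_
  rw [(mem_filter.1 hω).2]

lemma sum_prb [Fintype α] [DecidableEq α] (A : Ω → α) : ∑ a, prb p A a = ∑ ω, p ω := by
  simpa using sum_prb_mul (p := p) A 1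

lemma sum_prb_pair_left [Fintype α] [DecidableEq α] [DecidableEq γ] (A : Ω → α) (C : Ω → γ)
    (c : γ) : ∑ a, prb p (fun ω => (A ω, C ω)) (a, c) = prb p C c := by
  rw [prb, ← sum_fiberwise _ A p]
  refine sum_congr rfl fun a _ => ?_
  rw [prb, filter_filter]
  simp only [Prod.mk.injEq, and_comm]

lemma ent_eq_sum [Fintype α] [DecidableEq α] (A : Ω → α) :
    ent p A = -∑ ω, p ω * Real.log (prb p A (A ω)) := by
  rw [ent, sum_prb_mul A (fun a => Real.log (prb p A a))]

lemma prb_comp_of_injective [DecidableEq α] [DecidableEq β] {f : α → β}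
    (hf : Function.Injective f) (A : Ω → α) (a : α) :
    prb p (fun ω => f (A ω)) (f a) = prb p A a := by
  simp only [prb, hf.eq_iff]

lemma ent_comp_of_injective [Fintype α] [DecidableEq α] [Fintype β] [DecidableEq β]
    {f : α → β} (hf : Function.Injective f) (A : Ω → α) :
    ent p (fun ω => f (A ω)) = ent p A := by
  simp only [ent_eq_sum, prb_comp_of_injective hf]

lemma ent_prod_comm [Fintype α] [DecidableEq α] [Fintype β] [DecidableEq β]
    (A : Ω → α) (B : Ω → β) : ent p (fun ω => (B ω, A ω)) = ent p (fun ω => (A ω, B ω)) :=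
  ent_comp_of_injective Prod.swap_injective (fun ω => (A ω, B ω))

lemma mutInfo_of_subsingleton [Fintype α] [DecidableEq α] [Subsingleton α] [Fintype β]
    [DecidableEq β] (hps : ∑ ω, p ω = 1) (A : Ω → α) (B : Ω → β) : mutInfo p A B = 0 := by
  have hA : ent p A = 0 := by
    have hprb : ∀ ω, prb p A (A ω) = 1 := fun ω => by
      rw [prb, filter_true_of_mem fun _ _ => Subsingleton.elim _ _, hps]
    simp only [ent_eq_sum, hprb, Real.log_one, mul_zero, sum_const_zero, neg_zero]
  have hAB : ent p B = ent p (fun ω => (A ω, B ω)) :=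
    ent_comp_of_injective (f := Prod.snd) (fun x y h => Prod.ext (Subsingleton.elim _ _) h)
      (fun ω => (A ω, B ω))
  rw [mutInfo, hA, ← hAB]
  ring

lemma sum_mul_log_nonpos (hp : ∀ ω, 0 ≤ p ω) (R : Ω → ℝ) (hR : ∀ ω, p ω ≠ 0 → 0 < R ω)
    (hmass : ∑ ω, p ω * R ω ≤ ∑ ω, p ω) : ∑ ω, p ω * Real.log (R ω) ≤ 0 :=
  calc ∑ ω, p ω * Real.log (R ω) ≤ ∑ ω, p ω * (R ω - 1) := sum_le_sum fun ω _ => by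
        rcases (hp ω).eq_or_lt with h | h
        · simp [← h]
        · exact mul_le_mul_of_nonneg_left (Real.log_le_sub_one_of_pos (hR ω h.ne')) h.le
    _ ≤ 0 := by simp only [mul_sub, mul_one, sum_sub_distrib]; linarith

noncomputable def condIndepLaw [DecidableEq α] [DecidableEq β] [DecidableEq γ] (p : Ω → ℝ)
    (A : Ω → α) (B : Ω → β) (C : Ω → γ) (t : α × β × γ) : ℝ :=
  prb p (fun ω => (A ω, C ω)) (t.1, t.2.2) * prb p (fun ω => (B ω, C ω)) (t.2.1, t.2.2)
    / prb p C t.2.2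

lemma condIndepLaw_nonneg [DecidableEq α] [DecidableEq β] [DecidableEq γ] (hp : ∀ ω, 0 ≤ p ω)
    (A : Ω → α) (B : Ω → β) (C : Ω → γ) (t : α × β × γ) : 0 ≤ condIndepLaw p A B C t :=
  div_nonneg (mul_nonneg (prb_nonneg hp _ _) (prb_nonneg hp _ _)) (prb_nonneg hp _ _)

lemma sum_condIndepLaw [Fintype α] [Fintype β] [Fintype γ] [DecidableEq α] [DecidableEq β]
    [DecidableEq γ] (A : Ω → α) (B : Ω → β) (C : Ω → γ) :
    ∑ t, condIndepLaw p A B C t = ∑ ω, p ω := by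
  simp only [condIndepLaw, Fintype.sum_prod_type]
  calc _ = ∑ a, ∑ c, prb p (fun ω => (A ω, C ω)) (a, c)
          * (∑ b, prb p (fun ω => (B ω, C ω)) (b, c)) / prb p C c := by
        simp only [mul_sum, sum_div]
        exact sum_congr rfl fun a _ => sum_comm
    _ = ∑ c, ∑ a, prb p (fun ω => (A ω, C ω)) (a, c) * prb p C c / prb p C c := by
        simp only [sum_prb_pair_left]
        exact sum_comm
    _ = ∑ ω, p ω := by
        simp only [← sum_div, ← sum_mul, sum_prb_pair_left, mul_self_div_self, sum_prb]

/-- `I(A;B|C)` is the relative entropy of the law of `(A, B, C)` with respect to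
`condIndepLaw p A B C`, so Gibbs' inequality applies. -/
lemma condMutInfo_nonneg [Fintype α] [Fintype β] [Fintype γ] [DecidableEq α] [DecidableEq β]
    [DecidableEq γ] (hp : ∀ ω, 0 ≤ p ω) (A : Ω → α) (B : Ω → β) (C : Ω → γ) :
    0 ≤ condMutInfo p A B C := by
  set T : Ω → α × β × γ := fun ω => (A ω, B ω, C ω)
  set R : Ω → ℝ := fun ω => condIndepLaw p A B C (T ω) / prb p T (T ω)
  have hpos : ∀ ω, p ω ≠ 0 → 0 < prb p (fun ω => (A ω, C ω)) (A ω, C ω) ∧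
      0 < prb p (fun ω => (B ω, C ω)) (B ω, C ω) ∧ 0 < prb p C (C ω) ∧ 0 < prb p T (T ω) := by
    intro ω hω
    have h := (hp ω).lt_of_ne' hω
    exact ⟨h.trans_le (le_prb_self hp _ ω), h.trans_le (le_prb_self hp _ ω),
      h.trans_le (le_prb_self hp _ ω), h.trans_le (le_prb_self hp _ ω)⟩
  have hR : ∀ ω, p ω ≠ 0 → 0 < R ω := fun ω hω => by
    obtain ⟨h1, h2, h3, h4⟩ := hpos ω hω
    exact div_pos (div_pos (mul_pos h1 h2) h3) h4
  have hmass : ∑ ω, p ω * R ω ≤ ∑ ω, p ω :=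
    calc ∑ ω, p ω * R ω = ∑ t, prb p T t * (condIndepLaw p A B C t / prb p T t) :=
          (sum_prb_mul T fun t => condIndepLaw p A B C t / prb p T t).symm
      _ ≤ ∑ t, condIndepLaw p A B C t := sum_le_sum fun t _ => by
          rcases eq_or_ne (prb p T t) 0 with h | h
          · simpa [h] using condIndepLaw_nonneg hp A B C t
          · rw [mul_div_cancel₀ _ h]
      _ = ∑ ω, p ω := sum_condIndepLaw A B C
  have hlog : ∀ ω, p ω * Real.log (R ω)
      = p ω * (Real.log (prb p (fun ω => (A ω, C ω)) (A ω, C ω))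
      + Real.log (prb p (fun ω => (B ω, C ω)) (B ω, C ω)) - Real.log (prb p C (C ω))
      - Real.log (prb p T (T ω))) := fun ω => by
    rcases eq_or_ne (p ω) 0 with h | h
    · simp [h]
    · obtain ⟨h1, h2, h3, h4⟩ := hpos ω h
      simp only [R, condIndepLaw]
      rw [Real.log_div (by positivity) h4.ne', Real.log_div (by positivity) h3.ne',
        Real.log_mul h1.ne' h2.ne']
  have key := sum_mul_log_nonpos hp R hR hmass
  simp only [hlog, mul_add, mul_sub, sum_add_distrib, sum_sub_distrib] at key
  simp only [condMutInfo, ent_eq_sum]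
  linarith

lemma condMutInfo_comp_le_mutInfo_sub [Fintype α] [Fintype β] [Fintype γ] [Fintype δ]
    [DecidableEq α] [DecidableEq β] [DecidableEq γ] [DecidableEq δ] (hp : ∀ ω, 0 ≤ p ω)
    (B : Ω → β) (Y : Ω → δ) (f : β → α) (g : β → γ) :
    condMutInfo p (fun ω => f (B ω)) Y (fun ω => g (B ω))
      ≤ mutInfo p B Y - mutInfo p (fun ω => g (B ω)) Y := by
  have h := condMutInfo_nonneg hp B Y (fun ω => (f (B ω), g (B ω)))
  have e1 : ent p (fun ω => (B ω, f (B ω), g (B ω))) = ent p B :=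
    ent_comp_of_injective (f := fun b => (b, f b, g b))
      (Function.LeftInverse.injective (g := Prod.fst) fun _ => rfl) B
  have e2 : ent p (fun ω => (B ω, Y ω, f (B ω), g (B ω))) = ent p (fun ω => (B ω, Y ω)) :=
    ent_comp_of_injective (f := fun q : β × δ => (q.1, q.2, f q.1, g q.1))
      (Function.LeftInverse.injective (g := fun q => (q.1, q.2.1)) fun _ => rfl)
      (fun ω => (B ω, Y ω))
  have e3 : ent p (fun ω => (Y ω, f (B ω), g (B ω)))
      = ent p (fun ω => (f (B ω), Y ω, g (B ω))) :=
    ent_comp_of_injective (f := fun q : α × δ × γ => (q.2.1, q.1, q.2.2))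
      (Function.LeftInverse.injective (g := fun q => (q.2.1, q.1, q.2.2)) fun _ => rfl)
      (fun ω => (f (B ω), Y ω, g (B ω)))
  have e4 := ent_prod_comm (p := p) (fun ω => g (B ω)) Y
  simp only [condMutInfo, mutInfo] at h ⊢
  linarith

lemma mutInfo_comp_le [Fintype β] [Fintype γ] [Fintype δ] [DecidableEq β] [DecidableEq γ]
    [DecidableEq δ] (hp : ∀ ω, 0 ≤ p ω) (B : Ω → β) (Y : Ω → δ) (g : β → γ) :
    mutInfo p (fun ω => g (B ω)) Y ≤ mutInfo p B Y := by
  linarith [condMutInfo_nonneg hp (fun ω => g (B ω)) Y (fun ω => g (B ω)),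
    condMutInfo_comp_le_mutInfo_sub hp B Y g g]

end Entropy

lemma sum_range_sub_sub_eq (a : ℕ → ℝ) (d n : ℕ) :
    ∑ k ∈ range n, (a (k + 1) - a (k + 1 - d)) = ∑ s ∈ range d, (a (n - s) - a 0) := by
  have hshift : ∀ k, a (k + 1) - a (k + 1 - d) = ∑ s ∈ range d, (a (k + 1 - s) - a (k - s)) :=
    fun k => by simpa using (sum_range_sub' (fun s => a (k + 1 - s)) d).symm
  simp only [hshift]
  rw [sum_comm]
  refine sum_congr rfl fun s _ => ?_
  simpa using sum_range_sub (fun k => a (k - s)) n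

lemma sum_range_sub_sub_le (a : ℕ → ℝ) (d n : ℕ) (ha : ∀ m ≤ n, a m ≤ a n) :
    ∑ k ∈ range n, (a (k + 1) - a (k + 1 - d)) ≤ d * (a n - a 0) := by
  rw [sum_range_sub_sub_eq]
  calc ∑ s ∈ range d, (a (n - s) - a 0) ≤ ∑ s ∈ range d, (a n - a 0) :=
        sum_le_sum fun s _ => by linarith [ha (n - s) (Nat.sub_le n s)]
    _ = d * (a n - a 0) := by rw [sum_const, card_range, nsmul_eq_mul]

def prefixVec {Ω 𝒳 : Type} {n : ℕ} (X : Fin n → Ω → 𝒳) (m : ℕ) (hm : m ≤ n) :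
    Ω → Fin m → 𝒳 :=
  fun ω j => X (Fin.castLE hm j) ω

section Prefix

variable {Ω 𝒳 𝒴 : Type} [Fintype Ω] [Fintype 𝒳] [Fintype 𝒴] [DecidableEq 𝒳] [DecidableEq 𝒴]
  {p : Ω → ℝ} {n : ℕ} (X : Fin n → Ω → 𝒳) (Y : Ω → 𝒴)

lemma mutInfo_prefixVec_mono (hp : ∀ ω, 0 ≤ p ω) {m k : ℕ} (hmk : m ≤ k) (hk : k ≤ n) :
    mutInfo p (prefixVec X m (hmk.trans hk)) Y ≤ mutInfo p (prefixVec X k hk) Y :=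
  mutInfo_comp_le hp (prefixVec X k hk) Y fun x j => x (Fin.castLE hmk j)

lemma condMutInfo_prefixVec_le (hp : ∀ ω, 0 ≤ p ω) (i : Fin n) {m : ℕ} (hm : m ≤ i + 1) :
    condMutInfo p (X i) Y (prefixVec X m (hm.trans i.2))
      ≤ mutInfo p (prefixVec X (i + 1) i.2) Y - mutInfo p (prefixVec X m (hm.trans i.2)) Y :=
  condMutInfo_comp_le_mutInfo_sub hp (prefixVec X (i + 1) i.2) Y (fun x => x (Fin.last i))
    fun x j => x (Fin.castLE hm j)

end Prefix

/-- Here `i : Fin n` represents the `(i+1)`-st variable, so `X^{(i+1)−d}` has `i + 1 − d`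
components. -/
theorem stmt_6 {Ω 𝒳 𝒴 : Type} [Fintype Ω] [Fintype 𝒳] [Fintype 𝒴]
    [DecidableEq 𝒳] [DecidableEq 𝒴]
    (p : Ω → ℝ) (hp : ∀ ω, 0 ≤ p ω) (hps : ∑ ω, p ω = 1)
    {n : ℕ} (X : Fin n → Ω → 𝒳) (Y : Ω → 𝒴) (d : ℕ) :
    (d : ℝ) * mutInfo p (fun ω => fun i => X i ω) Y
      ≥ ∑ i : Fin n, condMutInfo p (X i) Y
          (fun ω => fun j : Fin (i.1 + 1 - d) =>
            X ⟨j.1, by have h1 := j.2; have h2 := i.2; omega⟩ ω) := by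
  let a : ℕ → ℝ := fun m => if h : m ≤ n then mutInfo p (prefixVec X m h) Y else 0
  have ha : ∀ m (h : m ≤ n), a m = mutInfo p (prefixVec X m h) Y := fun m h => dif_pos h
  have ha0 : a 0 = 0 := by rw [ha 0 n.zero_le]; exact mutInfo_of_subsingleton hps _ _
  have ha_le : ∀ m ≤ n, a m ≤ a n := fun m hm => by
    rw [ha m hm, ha n le_rfl]; exact mutInfo_prefixVec_mono X Y hp hm le_rfl
  calc ∑ i : Fin n, condMutInfo p (X i) Y (prefixVec X (i + 1 - d) (by omega))
      ≤ ∑ i : Fin n, (a (i + 1) - a (i + 1 - d)) := sum_le_sum fun i _ => by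
        rw [ha _ i.2, ha _ (by omega)]; exact condMutInfo_prefixVec_le X Y hp i (Nat.sub_le _ _)
    _ = ∑ k ∈ range n, (a (k + 1) - a (k + 1 - d)) :=
        Fin.sum_univ_eq_sum_range (fun k => a (k + 1) - a (k + 1 - d)) n
    _ ≤ d * (a n - a 0) := sum_range_sub_sub_le a d n ha_le
    _ = d * mutInfo p (prefixVec X n le_rfl) Y := by rw [ha0, sub_zero, ha n le_rfl]
end

section
/- Fix a finite alphabet 𝒳, an element x̄ ∈ 𝒳, and a positive integer n. Define 𝒜_n(x̄) = { p ∈ Δ_𝒳 : p(x̄) = max_{x'} p(x') and p(x̄) ∈ [1/(n+1), 1/n] }, and define ℱ = ℱ_n(x̄) ∪ ℱ_{n+1}(x̄), where ℱ_m(x̄) is the set of distributions uniform on some subset A ⊆ 𝒳 of size m whose maximum mass is attained at x̄ (i.e., x̄ ∈ A). Then 𝒜_n(x̄) is a convex set and its set of extreme points is exactly ℱ. -/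
/-- The uniform distribution on a finite subset `A` of `𝒳`. -/
noncomputable def unifOn {𝒳 : Type} [DecidableEq 𝒳] (A : Finset 𝒳) : 𝒳 → ℝ :=
  fun x => if x ∈ A then (1 : ℝ) / A.card else 0

/-- `𝒜_n(x̄)`: distributions whose maximum mass is attained at `x̄` and lies in
`[1/(n+1), 1/n]`. -/
def Aset {𝒳 : Type} [Fintype 𝒳] (xb : 𝒳) (n : ℕ) : Set (𝒳 → ℝ) :=
  {p | (∀ x, 0 ≤ p x) ∧ (∑ x, p x = 1) ∧ (∀ x', p x' ≤ p xb) ∧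
    (1 / (n + 1 : ℝ) ≤ p xb) ∧ (p xb ≤ 1 / (n : ℝ))}

/-- `ℱ_m(x̄)`: distributions uniform on a subset of size `m` containing `x̄`
(so the maximum mass is attained at `x̄`). -/
def Fset {𝒳 : Type} [DecidableEq 𝒳] (xb : 𝒳) (m : ℕ) : Set (𝒳 → ℝ) :=
  {p | ∃ A : Finset 𝒳, A.card = m ∧ xb ∈ A ∧ p = unifOn A}

/-! `Aset xb n` is cut out by the linear constraints `0 ≤ p x`, `∑ p = 1`, `p x ≤ p xb` and
`1 / (n + 1) ≤ p xb ≤ 1 / n`, so it is convex, and a point of it is not extreme as soon as some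
nonzero direction keeps all of its active constraints tight. For an extreme `p` with `t = p xb`
this rules out any mass strictly between `0` and `t`: two such points can trade mass, and a single
one `x₀` gives `#S * t < 1 < (#S + 1) * t` for the set `S` of maximal points, so `t` lies strictly
between the bounds and mass can be moved between `x₀` and `S`. Hence `p` is uniform on `S`, and
the bounds on `t = 1 / #S` give `#S ∈ {n, n + 1}`. Conversely, a convex combination equal to the
uniform distribution on `A` must vanish off `A` and sit at the active bound at `xb`, which pins it
down as that uniform distribution. -/

open Filter Topology
open scoped Finset

theorem eq_of_mem_openSegment_of_le {u w c : ℝ} (h : c ∈ openSegment ℝ u w) (hu : c ≤ u)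
    (hw : c ≤ w) : u = c := by
  rcases eq_or_ne u w with rfl | hne
  · rw [openSegment_same] at h
    exact h.symm
  · rw [openSegment_eq_Ioo' hne] at h
    exact (h.1.not_ge (le_min hu hw)).elim

theorem notMem_extremePoints_of_eventually_add_smul_mem {E : Type*} [AddCommGroup E]
    [Module ℝ E] {C : Set E} {p d : E} (hd : d ≠ 0)
    (h : ∀ᶠ ε in 𝓝 (0 : ℝ), p + ε • d ∈ C) : p ∉ C.extremePoints ℝ := by
  have hsymm : ∀ᶠ ε in 𝓝[≠] (0 : ℝ), ε ≠ 0 ∧ p + ε • d ∈ C ∧ p - ε • d ∈ C := by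
    have hneg : ∀ᶠ ε in 𝓝 (0 : ℝ), p + (-ε) • d ∈ C := by
      have := (tendsto_neg (0 : ℝ)).eventually (neg_zero (G := ℝ) ▸ h)
      simpa using this
    filter_upwards [self_mem_nhdsWithin, nhdsWithin_le_nhds h, nhdsWithin_le_nhds hneg]
      with ε hε hadd hsub
    exact ⟨hε, hadd, by simpa [sub_eq_add_neg] using hsub⟩
  obtain ⟨ε, hε, hadd, hsub⟩ := hsymm.exists
  intro hp
  have := hp.2 hadd hsub (mem_openSegment_add_sub p (ε • d))
  exact hd ((smul_eq_zero.1 (add_eq_left.1 this)).resolve_left hε)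

theorem eventually_add_mul_le {a b c e : ℝ} (hab : a ≤ b) (hce : a = b → c = e) :
    ∀ᶠ ε in 𝓝 (0 : ℝ), a + ε * c ≤ b + ε * e := by
  rcases hab.lt_or_eq with hlt | rfl
  · have hcont : Continuous fun ε : ℝ => b + ε * e - (a + ε * c) := by fun_prop
    have : Tendsto (fun ε : ℝ => b + ε * e - (a + ε * c)) (𝓝 0) (𝓝 (b - a)) := by
      simpa using hcont.tendsto 0
    filter_upwards [this.eventually_const_lt (sub_pos.2 hlt)] with ε hε
    linarith
  · simp [hce rfl]

section

variable {𝒳 : Type} [Fintype 𝒳] {xb : 𝒳} {n : ℕ}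

theorem convex_Aset : Convex ℝ (Aset xb n) := by
  rintro p ⟨hp0, hp1, hpmax, hplow, hpupp⟩ q ⟨hq0, hq1, hqmax, hqlow, hqupp⟩ a b ha hb hab
  have hbound := convex_Icc (1 / (n + 1 : ℝ)) (1 / n) ⟨hplow, hpupp⟩ ⟨hqlow, hqupp⟩ ha hb hab
  simp only [smul_eq_mul] at hbound
  simp only [Aset, Set.mem_ofPred_eq, Pi.add_apply, Pi.smul_apply, smul_eq_mul,
    Finset.sum_add_distrib, ← Finset.mul_sum, hp1, hq1]
  refine ⟨fun x => by have := hp0 x; have := hq0 x; positivity, by linarith,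
    fun x => by nlinarith [hpmax x, hqmax x], hbound.1, hbound.2⟩

theorem eventually_add_smul_mem_Aset {p d : 𝒳 → ℝ} (hp : p ∈ Aset xb n)
    (hd : ∑ x, d x = 0) (hzero : ∀ x, p x = 0 → d x = 0)
    (hmax : ∀ x, p x = p xb → d x = d xb) (hlow : p xb = 1 / (n + 1 : ℝ) → d xb = 0)
    (hupp : p xb = 1 / (n : ℝ) → d xb = 0) :
    ∀ᶠ ε in 𝓝 (0 : ℝ), p + ε • d ∈ Aset xb n := by
  obtain ⟨hp0, hp1, hpmax, hplow, hpupp⟩ := hp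
  have h0 : ∀ᶠ ε in 𝓝 (0 : ℝ), ∀ x, 0 + ε * 0 ≤ p x + ε * d x :=
    eventually_all.2 fun x => eventually_add_mul_le (hp0 x) fun h => (hzero x h.symm).symm
  have hmax' : ∀ᶠ ε in 𝓝 (0 : ℝ), ∀ x, p x + ε * d x ≤ p xb + ε * d xb :=
    eventually_all.2 fun x => eventually_add_mul_le (hpmax x) (hmax x)
  filter_upwards [h0, hmax', eventually_add_mul_le hplow fun h => (hlow h.symm).symm,
    eventually_add_mul_le hpupp hupp] with ε hε0 hεmax hεlow hεupp
  simp only [mul_zero, add_zero] at hε0 hεlow hεupp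
  refine ⟨hε0, ?_, hεmax, hεlow, hεupp⟩
  simp [Finset.sum_add_distrib, ← Finset.mul_sum, hp1, hd]

theorem mem_Ioo_of_mem_Aset {p : 𝒳 → ℝ} {x : 𝒳} (hp : p ∈ Aset xb n) (h₀ : p x ≠ 0)
    (hmax : p x ≠ p xb) : p x ∈ Set.Ioo 0 (p xb) :=
  ⟨(hp.1 x).lt_of_ne' h₀, (hp.2.2.1 x).lt_of_ne hmax⟩

end

section

variable {𝒳 : Type} [Fintype 𝒳] [DecidableEq 𝒳] {xb : 𝒳} {n : ℕ}

theorem unifOn_mem_Aset {A : Finset 𝒳} (hn : 0 < n) (hxb : xb ∈ A)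
    (hA : #A = n ∨ #A = n + 1) : unifOn A ∈ Aset xb n := by
  have hApos : (0 : ℝ) < #A := by exact_mod_cast Finset.card_pos.2 ⟨xb, hxb⟩
  have hxbval : unifOn A xb = 1 / #A := if_pos hxb
  refine ⟨fun x => ?_, ?_, fun x => ?_, ?_, ?_⟩
  · unfold unifOn; split_ifs <;> positivity
  · simp [unifOn, Finset.sum_ite_mem, hApos.ne']
  · rw [hxbval]; unfold unifOn; split_ifs
    exacts [le_rfl, by positivity]
  · rw [hxbval]
    gcongr
    rcases hA with h | h <;> simp [h]
  · rw [hxbval]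
    gcongr
    rcases hA with h | h <;> simp [h]

theorem eq_unifOn_of_mem_Aset {A : Finset 𝒳} {q : 𝒳 → ℝ} (hq : q ∈ Aset xb n) (hxb : xb ∈ A)
    (hsupp : ∀ x ∉ A, q x = 0) (hqxb : q xb ≤ 1 / #A) : q = unifOn A := by
  obtain ⟨hq0, hq1, hqmax, -, -⟩ := hq
  have hApos : (0 : ℝ) < #A := by exact_mod_cast Finset.card_pos.2 ⟨xb, hxb⟩
  have hsumA : ∑ x ∈ A, (1 / #A - q x) = 0 := by
    rw [Finset.sum_sub_distrib, Finset.sum_subset (Finset.subset_univ A) fun x _ hx => hsupp x hx,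
      hq1]
    simp [hApos.ne']
  have hA : ∀ x ∈ A, q x = 1 / #A := fun x hx => by
    have := (Finset.sum_eq_zero_iff_of_nonneg fun y _ => sub_nonneg.2 ((hqmax y).trans hqxb)).1
      hsumA x hx
    linarith
  funext x
  by_cases hx : x ∈ A
  · simp [unifOn, hx, hA x hx]
  · simp [unifOn, hx, hsupp x hx]

theorem unifOn_mem_extremePoints_Aset {A : Finset 𝒳} (hn : 0 < n) (hxb : xb ∈ A)
    (hA : #A = n ∨ #A = n + 1) : unifOn A ∈ (Aset xb n).extremePoints ℝ := by
  refine ⟨unifOn_mem_Aset hn hxb hA, fun q hq r hr hseg => ?_⟩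
  have hcoord (x : 𝒳) : unifOn A x ∈ openSegment ℝ (q x) (r x) :=
    Pi.openSegment_subset (s := Set.univ) q r hseg x (Set.mem_univ x)
  refine eq_unifOn_of_mem_Aset hq hxb (fun x hx => ?_) ?_
  · have hx0 : unifOn A x = 0 := if_neg hx
    exact hx0 ▸ eq_of_mem_openSegment_of_le (hcoord x) (hx0 ▸ hq.1 x) (hx0 ▸ hr.1 x)
  · have hxbval : unifOn A xb = 1 / #A := if_pos hxb
    rcases hA with h | h
    · simpa [h] using hq.2.2.2.2
    · refine (eq_of_mem_openSegment_of_le (hxbval ▸ hcoord xb) ?_ ?_).le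
      · simpa [h] using hq.2.2.2.1
      · simpa [h] using hr.2.2.2.1

end

theorem ne_one_div_natCast_of_mul_lt_one_lt_mul {k m : ℕ} {t : ℝ} (h₁ : k * t < 1)
    (h₂ : 1 < (k + 1) * t) : t ≠ 1 / m := by
  rintro rfl
  rcases m.eq_zero_or_pos with rfl | hm
  · norm_num at h₂
  · have hm' : (0 : ℝ) < m := by exact_mod_cast hm
    rw [mul_one_div, div_lt_one hm'] at h₁
    rw [mul_one_div, one_lt_div hm'] at h₂
    norm_cast at h₁ h₂
    omega

section

variable {𝒳 : Type} [DecidableEq 𝒳]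

def massShift (x₀ : 𝒳) (S : Finset 𝒳) : 𝒳 → ℝ :=
  fun x => (if x = x₀ then (#S : ℝ) else 0) - if x ∈ S then 1 else 0

theorem massShift_ne_zero {x₀ : 𝒳} {S : Finset 𝒳} (hx₀ : x₀ ∉ S) (hS : S.Nonempty) :
    massShift x₀ S ≠ 0 := fun h => by
  simpa [massShift, hx₀, hS.ne_empty] using congrFun h x₀

theorem massShift_apply_of_ne_of_notMem {x₀ x : 𝒳} {S : Finset 𝒳} (hx : x ≠ x₀) (hxS : x ∉ S) :
    massShift x₀ S x = 0 := by
  simp [massShift, hx, hxS]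

theorem sum_massShift [Fintype 𝒳] (x₀ : 𝒳) (S : Finset 𝒳) : ∑ x, massShift x₀ S x = 0 := by
  simp [massShift, Finset.sum_sub_distrib]

end

section

variable {𝒳 : Type} [Fintype 𝒳] [DecidableEq 𝒳] {xb : 𝒳} {n : ℕ} {p : 𝒳 → ℝ}

/-- Otherwise mass could be moved between `x` and `y` in either direction. -/
theorem eq_zero_or_eq_of_mem_extremePoints_Aset_of_ne {x y : 𝒳}
    (hp : p ∈ (Aset xb n).extremePoints ℝ) (hx : p x ∈ Set.Ioo 0 (p xb)) (hxy : y ≠ x) :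
    p y = 0 ∨ p y = p xb := by
  by_contra! hy
  have hy := mem_Ioo_of_mem_Aset hp.1 hy.1 hy.2
  have hd (z : 𝒳) (hz : p z = 0 ∨ p z = p xb) : massShift x {y} z = 0 := by
    refine massShift_apply_of_ne_of_notMem ?_ (Finset.notMem_singleton.2 ?_) <;>
      rintro rfl <;> rcases hz with hz | hz <;> linarith [hx.1, hx.2, hy.1, hy.2]
  refine notMem_extremePoints_of_eventually_add_smul_mem
    (massShift_ne_zero (Finset.notMem_singleton.2 hxy.symm) (Finset.singleton_nonempty y))
    (eventually_add_smul_mem_Aset hp.1 (sum_massShift _ _) (fun z hz => hd z (.inl hz))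
      (fun z hz => (hd z (.inr hz)).trans (hd xb (.inr rfl)).symm)
      (fun _ => hd xb (.inr rfl)) (fun _ => hd xb (.inr rfl))) hp

theorem eq_zero_or_eq_of_mem_extremePoints_Aset (hp : p ∈ (Aset xb n).extremePoints ℝ)
    (x : 𝒳) : p x = 0 ∨ p x = p xb := by
  by_contra! hx
  have hx := mem_Ioo_of_mem_Aset hp.1 hx.1 hx.2
  set t := p xb
  set S := Finset.univ.filter (p · = t)
  have hxS : x ∉ S := by simpa [S] using hx.2.ne
  have hxbS : xb ∈ S := by simp [S, t]
  have hsum : #S * t + p x = 1 := by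
    rw [← hp.1.2.1, ← Finset.sum_filter_add_sum_filter_not Finset.univ (p · = t)]
    congr 1
    · rw [Finset.sum_congr rfl fun y hy => (Finset.mem_filter.1 hy).2, Finset.sum_const,
        nsmul_eq_mul]
    · refine (Finset.sum_eq_single_of_mem x (by simpa using hx.2.ne) fun y hy hyx => ?_).symm
      exact (eq_zero_or_eq_of_mem_extremePoints_Aset_of_ne hp hx hyx).resolve_right
        (Finset.mem_filter.1 hy).2
  -- Counting: `#S * t < 1 < (#S + 1) * t` keeps `t` off the endpoints `1 / (n + 1)` and `1 / n`.
  have h₁ : #S * t < 1 := by linarith [hx.1]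
  have h₂ : 1 < (#S + 1) * t := by linarith [hx.2]
  have hd : ∀ y ∈ S, massShift x S y = -1 := fun y hy => by
    simp [massShift, hy, ne_of_mem_of_not_mem hy hxS]
  refine notMem_extremePoints_of_eventually_add_smul_mem
    (massShift_ne_zero hxS ⟨xb, hxbS⟩)
    (eventually_add_smul_mem_Aset hp.1 (sum_massShift _ _) (fun y hy => ?_)
      (fun y hy => (hd y (by simpa [S] using hy)).trans (hd xb hxbS).symm)
      (fun h => ?_) (fun h => ?_)) hp
  · refine massShift_apply_of_ne_of_notMem ?_ ?_
    · rintro rfl; linarith [hx.1]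
    · simp [S, hy, (hx.1.trans hx.2).ne]
  · exact absurd h (by exact_mod_cast ne_one_div_natCast_of_mul_lt_one_lt_mul (m := n + 1) h₁ h₂)
  · exact absurd h (ne_one_div_natCast_of_mul_lt_one_lt_mul h₁ h₂)

theorem mem_Fset_of_mem_extremePoints_Aset (hn : 0 < n) (hp : p ∈ (Aset xb n).extremePoints ℝ) :
    p ∈ Fset xb n ∪ Fset xb (n + 1) := by
  obtain ⟨-, hp1, -, hplow, hpupp⟩ := hp.1
  set t := p xb
  set S := Finset.univ.filter (p · = t)
  have hxbS : xb ∈ S := by simp [S, t]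
  have hsupp : ∀ x ∉ S, p x = 0 := fun x hx =>
    (eq_zero_or_eq_of_mem_extremePoints_Aset hp x).resolve_right (by simpa [S] using hx)
  have hS : #S * t = 1 := by
    rw [← hp1, ← Finset.sum_subset (Finset.subset_univ S) fun x _ hx => hsupp x hx,
      Finset.sum_congr rfl fun y hy => (Finset.mem_filter.1 hy).2, Finset.sum_const, nsmul_eq_mul]
  have hSpos : (0 : ℝ) < #S := by exact_mod_cast Finset.card_pos.2 ⟨xb, hxbS⟩
  have ht : t = 1 / #S := by rw [eq_div_iff hSpos.ne', mul_comm, hS]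
  have hpS : p = unifOn S := eq_unifOn_of_mem_Aset hp.1 hxbS hsupp ht.le
  have hle : #S ≤ n + 1 := by
    rw [ht, one_div_le_one_div (by positivity) hSpos] at hplow
    exact_mod_cast hplow
  have hge : n ≤ #S := by
    rw [ht, one_div_le_one_div hSpos (by exact_mod_cast hn)] at hpupp
    exact_mod_cast hpupp
  rcases hge.eq_or_lt with h | h
  · exact .inl ⟨S, h.symm, hxbS, hpS⟩
  · exact .inr ⟨S, by omega, hxbS, hpS⟩

end

/-- `𝒜_n(x̄)` is convex and its set of extreme points is exactly
`ℱ = ℱ_n(x̄) ∪ ℱ_{n+1}(x̄)`. -/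
theorem stmt_8 {𝒳 : Type} [Fintype 𝒳] [DecidableEq 𝒳] (xb : 𝒳) (n : ℕ) (hn : 0 < n) :
    Convex ℝ (Aset xb n) ∧
    Set.extremePoints ℝ (Aset xb n) = Fset xb n ∪ Fset xb (n + 1) := by
  refine ⟨convex_Aset, Set.Subset.antisymm
    (fun _ hp => mem_Fset_of_mem_extremePoints_Aset hn hp) ?_⟩
  rintro p (⟨A, hA, hxb, rfl⟩ | ⟨A, hA, hxb, rfl⟩)
  · exact unifOn_mem_extremePoints_Aset hn hxb (.inl hA)
  · exact unifOn_mem_extremePoints_Aset hn hxb (.inr hA)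
end

section
/- Let P_X ∈ Δ_𝒳 be a distribution on a finite set, let x̄ be a mode of P_X (a maximizer of P_X), and let N satisfy P_X(x̄) ∈ [1/(N+1), 1/N]. Then for every n ∈ {1,…,N}, P_X can be written as a finite convex combination of distributions each of which is uniform on a subset of 𝒳 of size exactly n. -/
/-!
Scaled by `n`, a distribution whose mode has mass at most `1 / n` becomes a point `f` of the
hypersimplex `{f ∈ [0,1]^𝒳 | ∑ f = n}`, and the claim is that `f` is a convex combination of
indicators of `n`-element sets. Induct on the number of fractional coordinates (those strictly
between `0` and `1`). With none, `f` is such an indicator. Exactly one is impossible, since all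
other coordinates and their total `n` are integers. With two of them, `a` and `b`, moving mass
from `a` to `b`, or from `b` to `a`, until one of them reaches `0` or `1` exhibits `f` as a point
of a segment whose endpoints lie in the hypersimplex and have fewer fractional coordinates.
-/

open Finset

section Hypersimplex

variable {𝒳 : Type*} [Fintype 𝒳] {n : ℕ} {f : 𝒳 → ℝ}

def hypersimplex (𝒳 : Type*) [Fintype 𝒳] (n : ℕ) : Set (𝒳 → ℝ) :=
  {f | (∀ x, f x ∈ Set.Icc 0 1) ∧ ∑ x, f x = n}

def cardIndicators (𝒳 : Type*) (n : ℕ) : Set (𝒳 → ℝ) :=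
  (fun A : Finset 𝒳 => (A : Set 𝒳).indicator 1) '' {A | #A = n}

noncomputable def fracSupport (f : 𝒳 → ℝ) : Finset 𝒳 := {x | 0 < f x ∧ f x < 1}

@[simp]
lemma mem_fracSupport {x : 𝒳} : x ∈ fracSupport f ↔ 0 < f x ∧ f x < 1 := by
  simp [fracSupport]

lemma eq_zero_or_eq_one_of_notMem_fracSupport (hf : f ∈ hypersimplex 𝒳 n) {x : 𝒳}
    (hx : x ∉ fracSupport f) : f x = 0 ∨ f x = 1 := by
  obtain ⟨h0, h1⟩ := hf.1 x
  by_contra! h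
  exact hx (mem_fracSupport.mpr ⟨h0.lt_of_ne' h.1, h1.lt_of_ne h.2⟩)

lemma sum_eq_card_of_disjoint_fracSupport (hf : f ∈ hypersimplex 𝒳 n) {s : Finset 𝒳}
    (hs : Disjoint s (fracSupport f)) : ∑ x ∈ s, f x = #{x ∈ s | f x = 1} := by
  rw [natCast_card_filter]
  refine sum_congr rfl fun x hx => ?_
  rcases eq_zero_or_eq_one_of_notMem_fracSupport hf (disjoint_left.mp hs hx) with h | h <;>
    simp [h]

lemma card_fracSupport_ne_one (hf : f ∈ hypersimplex 𝒳 n) : #(fracSupport f) ≠ 1 := by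
  classical
  intro h
  obtain ⟨x₀, hx₀⟩ := card_eq_one.mp h
  have hx₀f : 0 < f x₀ ∧ f x₀ < 1 := mem_fracSupport.mp (hx₀ ▸ mem_singleton_self x₀)
  have hrest := sum_eq_card_of_disjoint_fracSupport hf (s := univ.erase x₀) (by simp [hx₀])
  have htotal := add_sum_erase univ f (mem_univ x₀)
  rw [hrest, hf.2] at htotal
  set m := #{x ∈ univ.erase x₀ | f x = 1}
  have hmn : m < n := by exact_mod_cast (by linarith : (m : ℝ) < n)
  have hnm : n < m + 1 := by exact_mod_cast (by linarith : (n : ℝ) < m + 1)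
  omega

lemma mem_cardIndicators_of_fracSupport_eq_empty (hf : f ∈ hypersimplex 𝒳 n)
    (h : fracSupport f = ∅) : f ∈ cardIndicators 𝒳 n := by
  refine ⟨({x | f x = 1} : Finset 𝒳), ?_, funext fun x => ?_⟩
  · have := sum_eq_card_of_disjoint_fracSupport hf (s := univ) (by simp [h])
    rw [hf.2] at this
    exact_mod_cast this.symm
  · rcases eq_zero_or_eq_one_of_notMem_fracSupport hf (x := x) (by simp [h]) with hx | hx <;>
      simp [hx]

lemma exists_transfer_mem_hypersimplex [DecidableEq 𝒳] (hf : f ∈ hypersimplex 𝒳 n) {a b : 𝒳}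
    (ha : a ∈ fracSupport f) (hb : b ∈ fracSupport f) (hab : a ≠ b) :
    ∃ t : ℝ, 0 < t ∧ f + t • (Pi.single b 1 - Pi.single a 1) ∈ hypersimplex 𝒳 n ∧
      fracSupport (f + t • (Pi.single b 1 - Pi.single a 1)) ⊂ fracSupport f := by
  obtain ⟨ha0, ha1⟩ := mem_fracSupport.mp ha
  obtain ⟨hb0, hb1⟩ := mem_fracSupport.mp hb
  set t := min (f a) (1 - f b) with ht_def
  have hta : t ≤ f a := min_le_left _ _
  have htb : t ≤ 1 - f b := min_le_right _ _
  set g := f + t • (Pi.single b 1 - Pi.single a 1 : 𝒳 → ℝ)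
  have hga : g a = f a - t := by simp [g, hab, ← sub_eq_add_neg]
  have hgb : g b = f b + t := by simp [g, hab.symm]
  have hgx : ∀ x, x ≠ a → x ≠ b → g x = f x := fun x hxa hxb => by simp [g, hxa, hxb]
  have ht : 0 < t := lt_min ha0 (by linarith)
  refine ⟨t, ht, ⟨fun x => show g x ∈ _ from ?_, ?_⟩,
    show fracSupport g ⊂ _ from ?_⟩
  · by_cases hxa : x = a
    · subst hxa; rw [hga]; constructor <;> linarith
    by_cases hxb : x = b
    · subst hxb; rw [hgb]; constructor <;> linarith
    rw [hgx x hxa hxb]; exact hf.1 x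
  · simp [sum_add_distrib, hf.2, ← mul_sum, sum_sub_distrib]
  refine (ssubset_iff_of_subset fun x hx => ?_).mpr ?_
  · by_cases hxa : x = a
    · exact hxa ▸ ha
    by_cases hxb : x = b
    · exact hxb ▸ hb
    rw [mem_fracSupport, ← hgx x hxa hxb]
    exact mem_fracSupport.mp hx
  rcases min_choice (f a) (1 - f b) with h | h <;> rw [← ht_def] at h
  · exact ⟨a, ha, fun hg => by rw [mem_fracSupport, hga] at hg; linarith [hg.1]⟩
  · exact ⟨b, hb, fun hg => by rw [mem_fracSupport, hgb] at hg; linarith [hg.2]⟩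

lemma Convex.mem_of_add_smul_mem_of_add_smul_neg_mem {E : Type*} [AddCommGroup E] [Module ℝ E]
    {C : Set E} (hC : Convex ℝ C) {x d : E} {s t : ℝ} (hs : 0 < s) (ht : 0 < t)
    (h₁ : x + s • d ∈ C) (h₂ : x + t • -d ∈ C) : x ∈ C := by
  have hst : 0 < s + t := add_pos hs ht
  convert hC h₁ h₂ (div_nonneg ht.le hst.le) (div_nonneg hs.le hst.le) (by field_simp; ring)
    using 1
  match_scalars <;> field_simp <;> ring_nf

lemma hypersimplex_subset_convexHull [DecidableEq 𝒳] :
    hypersimplex 𝒳 n ⊆ convexHull ℝ (cardIndicators 𝒳 n) := by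
  intro f hf
  induction hk : #(fracSupport f) using Nat.strong_induction_on generalizing f with
  | _ k ih =>
    rcases Nat.lt_or_ge k 2 with hk2 | hk2
    · have hk0 : k = 0 := by have := card_fracSupport_ne_one hf; omega
      exact subset_convexHull ℝ _
        (mem_cardIndicators_of_fracSupport_eq_empty hf (card_eq_zero.mp (hk.trans hk0)))
    · obtain ⟨a, ha, b, hb, hab⟩ := one_lt_card.mp (by omega : 1 < #(fracSupport f))
      obtain ⟨s, hs, hfs, hsub⟩ := exists_transfer_mem_hypersimplex hf ha hb hab
      obtain ⟨t, ht, hft, htsub⟩ := exists_transfer_mem_hypersimplex hf hb ha hab.symm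
      rw [← neg_sub] at hft htsub
      exact (convex_convexHull ℝ _).mem_of_add_smul_mem_of_add_smul_neg_mem hs ht
        (ih _ (hk ▸ card_lt_card hsub) hfs rfl) (ih _ (hk ▸ card_lt_card htsub) hft rfl)

lemma exists_weights_of_mem_convexHull_cardIndicators
    (hf : f ∈ convexHull ℝ (cardIndicators 𝒳 n)) :
    ∃ w : Finset 𝒳 → ℝ, (∀ A, 0 ≤ w A) ∧ ∑ A, w A = 1 ∧ (∀ A, w A ≠ 0 → #A = n) ∧
      ∀ x, f x = ∑ A, w A * (A : Set 𝒳).indicator 1 x := by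
  classical
  obtain ⟨ι, _, c, z, hc0, hc1, hz, rfl⟩ := mem_convexHull_iff_exists_fintype.mp hf
  choose A hA hAz using hz
  refine ⟨fun B => ∑ i with A i = B, c i, fun B => sum_nonneg fun i _ => hc0 i,
    by rw [sum_fiberwise, hc1], fun B hB => ?_, fun x => ?_⟩
  · obtain ⟨i, hi, -⟩ := exists_ne_zero_of_sum_ne_zero hB
    exact (mem_filter.mp hi).2 ▸ hA i
  · calc (∑ i, c i • z i) x = ∑ i, c i * (A i : Set 𝒳).indicator 1 x := by
          simp [Finset.sum_apply, ← hAz]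
      _ = ∑ B, ∑ i with A i = B, c i * (A i : Set 𝒳).indicator 1 x := (sum_fiberwise _ _ _).symm
      _ = ∑ B, (∑ i with A i = B, c i) * (B : Set 𝒳).indicator 1 x := by
          refine sum_congr rfl fun B _ => ?_
          rw [sum_mul]
          exact sum_congr rfl fun i hi => by rw [(mem_filter.mp hi).2]

end Hypersimplex

theorem stmt_10_general {𝒳 : Type} [Fintype 𝒳] [DecidableEq 𝒳]
    (P : 𝒳 → ℝ) (hP : ∀ x, 0 ≤ P x) (hPs : ∑ x, P x = 1)
    (xb : 𝒳) (hmode : ∀ x, P x ≤ P xb)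
    (N : ℕ) (hN2 : P xb ≤ 1 / (N : ℝ))
    (n : ℕ) (hn1 : 1 ≤ n) (hnN : n ≤ N) :
    ∃ w : Finset 𝒳 → ℝ, (∀ A, 0 ≤ w A) ∧ (∑ A : Finset 𝒳, w A = 1) ∧
      (∀ A, w A ≠ 0 → A.card = n) ∧
      ∀ x, P x = ∑ A : Finset 𝒳, w A * (if x ∈ A then (1 : ℝ) / n else 0) := by
  have hn : (0 : ℝ) < n := by exact_mod_cast hn1
  have hPn : ∀ x, P x ≤ 1 / n := fun x =>
    (hmode x).trans (hN2.trans (one_div_le_one_div_of_le hn (by exact_mod_cast hnN)))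
  have hmem : (fun x => n * P x) ∈ hypersimplex 𝒳 n :=
    ⟨fun x => ⟨by have := hP x; positivity, (le_div_iff₀' hn).mp (hPn x)⟩,
      by rw [← mul_sum, hPs, mul_one]⟩
  obtain ⟨w, hw0, hw1, hwcard, hwP⟩ :=
    exists_weights_of_mem_convexHull_cardIndicators (hypersimplex_subset_convexHull hmem)
  refine ⟨w, hw0, hw1, hwcard, fun x => ?_⟩
  calc P x = (n * P x) / n := by field_simp
    _ = ∑ A, w A * (if x ∈ A then (1 : ℝ) / n else 0) := by
        rw [hwP x, sum_div]
        refine sum_congr rfl fun A _ => ?_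
        by_cases hx : x ∈ A <;> simp [hx, div_eq_mul_inv]

/-- If `x̄` is a mode of `P_X` and `P_X(x̄) ∈ [1/(N+1), 1/N]`, then for every
`n ∈ {1, …, N}`, `P_X` is a finite convex combination of distributions each uniform on a
subset of `𝒳` of size exactly `n`. -/
theorem stmt_10 {𝒳 : Type} [Fintype 𝒳] [DecidableEq 𝒳]
    (P : 𝒳 → ℝ) (hP : ∀ x, 0 ≤ P x) (hPs : ∑ x, P x = 1)
    (xb : 𝒳) (hmode : ∀ x, P x ≤ P xb)
    (N : ℕ) (hN1 : 1 / (N + 1 : ℝ) ≤ P xb) (hN2 : P xb ≤ 1 / (N : ℝ))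
    (n : ℕ) (hn1 : 1 ≤ n) (hnN : n ≤ N) :
    ∃ w : Finset 𝒳 → ℝ, (∀ A, 0 ≤ w A) ∧ (∑ A : Finset 𝒳, w A = 1) ∧
      (∀ A, w A ≠ 0 → A.card = n) ∧
      ∀ x, P x = ∑ A : Finset 𝒳, w A * (if x ∈ A then (1 : ℝ) / n else 0) :=
  stmt_10_general P hP hPs xb hmode N hN2 n hn1 hnN
end

section
/- Under a joint distribution where (X_t, Y_t) − (Ū^n, S^{t−1}) − (M, W^{t−1}) and (X_t, Y_t) − Ū^n − S^{t−1} are Markov chains, the conditional expectation of π(X_t, Y_t, Z_t*) given (S^{t−1}, Ū^n) is at least min over functions z of E[π(X_t, Y_t, z) | Ū^n], for any Z_t* that is a function of (M, W^{t−1}). Consequently the process S_t = Σ_{i≤t} (π(X_i,Y_i,Z_i*) − ρ_i(Ū^n)), where ρ_i(Ū^n) = min_z E[π(X_i,Y_i,z) | Ū^n], is a submartingale conditioned on Ū^n. -/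
/-- Probability of an event under pmf `p` on a finite space. -/
noncomputable def cprob {Ω : Type} [Fintype Ω] (p : Ω → ℝ) (E : Ω → Prop)
    [DecidablePred E] : ℝ :=
  ∑ ω ∈ Finset.univ.filter E, p ω

/-- Conditional expectation of `f` given the event `E`, under pmf `p`. -/
noncomputable def cexp {Ω : Type} [Fintype Ω] (p : Ω → ℝ) (f : Ω → ℝ) (E : Ω → Prop)
    [DecidablePred E] : ℝ :=
  (∑ ω ∈ Finset.univ.filter E, p ω * f ω) / ∑ ω ∈ Finset.univ.filter E, p ω

/-! Condition on `E = {Ū = u, S^{t-1} = v}` and split `E[π(X_t, Y_t, Z_t*) | E]` over the values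
`b` of `B = (M, W^{t-1})`, on which `Z_t* = z_t(b)` is constant. The first Markov chain makes
`(X_t, Y_t)` independent of `B` given `E`, the second makes the law of `(X_t, Y_t)` given `E` equal
to its law given `Ū = u`; so each piece is `E[π(X_t, Y_t, z_t(b)) | Ū = u] ≥ ρ_t(u)`, and averaging
over `b` gives the first claim. On `E` the past `S_{t-1} = v_{t-1}` is fixed and
`S_t - S_{t-1} = π(X_t, Y_t, Z_t*) - ρ_t(u)`, which gives the submartingale inequality. -/

open scoped Classical

section Conditioning

variable {Ω : Type} [Fintype Ω] (p : Ω → ℝ)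

lemma cprob_nonneg (hp : ∀ ω, 0 ≤ p ω) (E : Ω → Prop) [DecidablePred E] :
    0 ≤ cprob p E :=
  Finset.sum_nonneg fun ω _ => hp ω

lemma cprob_congr {E F : Ω → Prop} [DecidablePred E] [DecidablePred F]
    (h : ∀ ω, E ω ↔ F ω) : cprob p E = cprob p F := by
  unfold cprob
  congr 1
  exact Finset.filter_congr fun ω _ => h ω

lemma cprob_mono (hp : ∀ ω, 0 ≤ p ω) {E F : Ω → Prop} [DecidablePred E] [DecidablePred F]
    (h : ∀ ω, E ω → F ω) : cprob p E ≤ cprob p F :=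
  Finset.sum_le_sum_of_subset_of_nonneg (Finset.monotone_filter_right _ fun ω _ => h ω)
    fun ω _ _ => hp ω

lemma sum_filter_mul_comp {α : Type} [Fintype α] (E : Ω → Prop) [DecidablePred E]
    (g : Ω → α) (f : α → ℝ) :
    ∑ ω ∈ Finset.univ.filter E, p ω * f (g ω)
      = ∑ a, cprob p (fun ω => E ω ∧ g ω = a) * f a := by
  rw [← Finset.sum_fiberwise (Finset.univ.filter E) g]
  refine Finset.sum_congr rfl fun a _ => ?_
  rw [cprob, Finset.sum_mul, Finset.filter_filter]
  exact Finset.sum_congr rfl fun ω hω => by rw [(Finset.mem_filter.mp hω).2.2]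

lemma cprob_eq_sum_cprob {α : Type} [Fintype α] (E : Ω → Prop) [DecidablePred E]
    (g : Ω → α) : cprob p E = ∑ a, cprob p (fun ω => E ω ∧ g ω = a) := by
  have h := sum_filter_mul_comp p E g fun _ => 1
  simp only [mul_one] at h
  exact h

lemma cexp_congr {f g : Ω → ℝ} (E : Ω → Prop) [DecidablePred E]
    (h : ∀ ω, E ω → f ω = g ω) : cexp p f E = cexp p g E := by
  unfold cexp
  congr 1
  exact Finset.sum_congr rfl fun ω hω => by rw [h ω (Finset.mem_filter.mp hω).2]

lemma le_cexp_iff (f : Ω → ℝ) (E : Ω → Prop) [DecidablePred E] (hE : 0 < cprob p E)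
    (r : ℝ) : r ≤ cexp p f E ↔ r * cprob p E ≤ ∑ ω ∈ Finset.univ.filter E, p ω * f ω :=
  le_div_iff₀ hE

lemma cexp_add_const (f : Ω → ℝ) (E : Ω → Prop) [DecidablePred E] (c : ℝ)
    (hE : cprob p E ≠ 0) : cexp p (fun ω => f ω + c) E = cexp p f E + c := by
  unfold cexp
  rw [cprob] at hE
  simp only [mul_add, Finset.sum_add_distrib, ← Finset.sum_mul, add_div]
  rw [mul_div_cancel_left₀ c hE]

/-- `hfac` says that, given `E`, `A` is independent of `B` and has the same law as given `F`. -/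
lemma le_cexp_of_cprob_factorization {α β : Type} [Fintype α] [Fintype β]
    (hp : ∀ ω, 0 ≤ p ω) {E F : Ω → Prop} [DecidablePred E] [DecidablePred F]
    (A : Ω → α) (B : Ω → β) (hE : 0 < cprob p E) (hF : 0 < cprob p F)
    (hfac : ∀ a b, cprob p (fun ω => E ω ∧ A ω = a ∧ B ω = b) * cprob p F
      = cprob p (fun ω => F ω ∧ A ω = a) * cprob p (fun ω => E ω ∧ B ω = b))
    (f : α → β → ℝ) (r : ℝ) (hr : ∀ b, r ≤ cexp p (fun ω => f (A ω) b) F) :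
    r ≤ cexp p (fun ω => f (A ω) (B ω)) E := by
  have hrb : ∀ b, r * cprob p F ≤ ∑ a, cprob p (fun ω => F ω ∧ A ω = a) * f a b := fun b => by
    rw [← sum_filter_mul_comp p F A (f · b)]
    exact (le_cexp_iff p _ F hF r).1 (hr b)
  have hnum : ∑ ω ∈ Finset.univ.filter E, p ω * f (A ω) (B ω)
      = ∑ b, ∑ a, cprob p (fun ω => E ω ∧ A ω = a ∧ B ω = b) * f a b := by
    rw [sum_filter_mul_comp p E (fun ω => (A ω, B ω)) (fun ab => f ab.1 ab.2),
      Fintype.sum_prod_type_right]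
    simp only [Prod.mk.injEq]
  rw [le_cexp_iff p _ E hE, ← mul_le_mul_iff_of_pos_right hF, hnum]
  calc r * cprob p E * cprob p F
      = ∑ b, cprob p (fun ω => E ω ∧ B ω = b) * (r * cprob p F) := by
        rw [cprob_eq_sum_cprob p E B, Finset.mul_sum, Finset.sum_mul]
        exact Finset.sum_congr rfl fun b _ => by ring
    _ ≤ ∑ b, cprob p (fun ω => E ω ∧ B ω = b)
          * ∑ a, cprob p (fun ω => F ω ∧ A ω = a) * f a b :=
        Finset.sum_le_sum fun b _ => mul_le_mul_of_nonneg_left (hrb b) (cprob_nonneg p hp _)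
    _ = (∑ b, ∑ a, cprob p (fun ω => E ω ∧ A ω = a ∧ B ω = b) * f a b) * cprob p F := by
        simp only [Finset.mul_sum, Finset.sum_mul]
        refine Finset.sum_congr rfl fun b _ => Finset.sum_congr rfl fun a _ => ?_
        linear_combination f a b * (hfac a b).symm

end Conditioning

section MarkovChain

variable {Ω α β γ υ : Type} [Fintype Ω] (p : Ω → ℝ)

def IsMarkovChain (A : Ω → α) (C : Ω → γ) (B : Ω → β) : Prop :=
  ∀ a c b, cprob p (fun ω => A ω = a ∧ C ω = c ∧ B ω = b) * cprob p (fun ω => C ω = c)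
    = cprob p (fun ω => A ω = a ∧ C ω = c) * cprob p (fun ω => C ω = c ∧ B ω = b)

theorem le_cexp_of_isMarkovChain [Fintype α] [Fintype β] (hp : ∀ ω, 0 ≤ p ω)
    (A : Ω → α) (U : Ω → υ) (V : Ω → γ) (B : Ω → β)
    (h₁ : IsMarkovChain p A (fun ω => (U ω, V ω)) B) (h₂ : IsMarkovChain p A U V) {u : υ} {v : γ}
    (hpos : 0 < cprob p (fun ω => U ω = u ∧ V ω = v))
    (f : α → β → ℝ) (r : ℝ) (hr : ∀ b, r ≤ cexp p (fun ω => f (A ω) b) (fun ω => U ω = u)) :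
    r ≤ cexp p (fun ω => f (A ω) (B ω)) (fun ω => U ω = u ∧ V ω = v) := by
  refine le_cexp_of_cprob_factorization p hp A B hpos
    (hpos.trans_le (cprob_mono p hp fun _ h => h.1)) (fun a b => ?_) f r hr
  have e₁ := h₁ a (u, v) b
  have e₂ := h₂ a u v
  simp only [Prod.mk.injEq] at e₁
  have hEAB : cprob p (fun ω => (U ω = u ∧ V ω = v) ∧ A ω = a ∧ B ω = b)
      = cprob p (fun ω => A ω = a ∧ (U ω = u ∧ V ω = v) ∧ B ω = b) :=
    cprob_congr p fun _ => and_left_comm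
  have hFA : cprob p (fun ω => U ω = u ∧ A ω = a) = cprob p (fun ω => A ω = a ∧ U ω = u) :=
    cprob_congr p fun _ => and_comm
  rw [hEAB, hFA]
  refine mul_right_cancel₀ hpos.ne' ?_
  linear_combination cprob p (fun ω => U ω = u) * e₁
    + cprob p (fun ω => (U ω = u ∧ V ω = v) ∧ B ω = b) * e₂

end MarkovChain

theorem Fin.sum_filter_le_eq_add_pred {M : Type} [AddCommMonoid M] {T : ℕ} (g : Fin T → M)
    (t : Fin T) :
    ∑ i ∈ Finset.univ.filter (· ≤ t), g i
      = g t + if h : 0 < t.1 then ∑ i ∈ Finset.univ.filter (· ≤ ⟨t.1 - 1, by omega⟩), g i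
        else 0 := by
  have hinsert : Finset.univ.filter (· ≤ t) = insert t (Finset.univ.filter (· < t)) := by
    ext i
    simp [le_iff_lt_or_eq, or_comm]
  rw [hinsert, Finset.sum_insert (by simp)]
  congr 1
  split_ifs with h
  · refine Finset.sum_congr ?_ fun _ _ => rfl
    ext i
    simp only [Finset.mem_filter, Finset.mem_univ, true_and, Fin.lt_def, Fin.le_def]
    omega
  · refine Finset.sum_eq_zero fun i hi => absurd (Finset.mem_filter.mp hi).2 ?_
    simp only [Fin.lt_def]
    omega

open scoped Classical in
/-- Suppose `Z_t* = z_t(M, W^{t−1})`, `ρ_t(ū) = min_z E[π(X_t,Y_t,z) | Ū = ū]`,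
and `S_t = ∑_{i ≤ t} (π(X_i,Y_i,Z_i*) − ρ_i(Ū))`.  If the Markov chains
`(X_t, Y_t) − (Ū, S^{t−1}) − (M, W^{t−1})` and `(X_t, Y_t) − Ū − S^{t−1}` hold, then whenever
the conditioning event `{S^{t−1} = v, Ū = u}` has positive probability,
`E[π(X_t,Y_t,Z_t*) | S^{t−1} = v, Ū = u] ≥ ρ_t(u)`; consequently `S` is a submartingale
conditioned on `Ū`: `E[S_t | S^{t−1} = v, Ū = u] ≥ S_{t−1} (= v_{t−1}, or 0 for t = 0)`. -/
theorem stmt_16 {Ω 𝒳 𝒴 𝒵 𝒰 ℳ 𝒲 : Type} [Fintype Ω] [Fintype 𝒳] [Fintype 𝒴] [Fintype 𝒵]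
    [Fintype ℳ] [Fintype 𝒲]
    (p : Ω → ℝ) (hp : ∀ ω, 0 ≤ p ω)
    {T : ℕ} (X : Fin T → Ω → 𝒳) (Y : Fin T → Ω → 𝒴) (Ubar : Ω → 𝒰)
    (M : Ω → ℳ) (W : Fin T → Ω → 𝒲)
    (π : 𝒳 → 𝒴 → 𝒵 → ℝ)
    (z : (t : Fin T) → ℳ → (Fin t.1 → 𝒲) → 𝒵)
    (ρ : Fin T → 𝒰 → ℝ)
    (hρ : ∀ (t : Fin T) (u : 𝒰), ρ t u =
      ⨅ zz : 𝒵, cexp p (fun ω => π (X t ω) (Y t ω) zz) (fun ω => Ubar ω = u))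
    (Zstar : Fin T → Ω → 𝒵)
    (hZ : ∀ (t : Fin T) (ω : Ω),
      Zstar t ω = z t (M ω) (fun i : Fin t.1 => W ⟨i.1, i.2.trans t.2⟩ ω))
    (S : Fin T → Ω → ℝ)
    (hS : ∀ (t : Fin T) (ω : Ω), S t ω =
      ∑ i ∈ Finset.univ.filter (fun i : Fin T => i ≤ t),
        (π (X i ω) (Y i ω) (Zstar i ω) - ρ i (Ubar ω)))
    -- Markov chain (X_t, Y_t) − (Ū, S^{t−1}) − (M, W^{t−1}):
    (hMC1 : ∀ (t : Fin T) (a : 𝒳 × 𝒴) (c : 𝒰 × (Fin t.1 → ℝ)) (b : ℳ × (Fin t.1 → 𝒲)),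
      cprob p (fun ω => (X t ω, Y t ω) = a ∧
          (Ubar ω, fun i : Fin t.1 => S ⟨i.1, i.2.trans t.2⟩ ω) = c ∧
          (M ω, fun i : Fin t.1 => W ⟨i.1, i.2.trans t.2⟩ ω) = b)
        * cprob p (fun ω => (Ubar ω, fun i : Fin t.1 => S ⟨i.1, i.2.trans t.2⟩ ω) = c)
      = cprob p (fun ω => (X t ω, Y t ω) = a ∧
          (Ubar ω, fun i : Fin t.1 => S ⟨i.1, i.2.trans t.2⟩ ω) = c)
        * cprob p (fun ω => (Ubar ω, fun i : Fin t.1 => S ⟨i.1, i.2.trans t.2⟩ ω) = c ∧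
          (M ω, fun i : Fin t.1 => W ⟨i.1, i.2.trans t.2⟩ ω) = b))
    -- Markov chain (X_t, Y_t) − Ū − S^{t−1}:
    (hMC2 : ∀ (t : Fin T) (a : 𝒳 × 𝒴) (u : 𝒰) (s : Fin t.1 → ℝ),
      cprob p (fun ω => (X t ω, Y t ω) = a ∧ Ubar ω = u ∧
          (fun i : Fin t.1 => S ⟨i.1, i.2.trans t.2⟩ ω) = s)
        * cprob p (fun ω => Ubar ω = u)
      = cprob p (fun ω => (X t ω, Y t ω) = a ∧ Ubar ω = u)
        * cprob p (fun ω => Ubar ω = u ∧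
          (fun i : Fin t.1 => S ⟨i.1, i.2.trans t.2⟩ ω) = s)) :
    ∀ (t : Fin T) (v : Fin t.1 → ℝ) (u : 𝒰),
      0 < cprob p (fun ω => Ubar ω = u ∧
          (fun i : Fin t.1 => S ⟨i.1, i.2.trans t.2⟩ ω) = v) →
      (cexp p (fun ω => π (X t ω) (Y t ω) (Zstar t ω))
          (fun ω => Ubar ω = u ∧ (fun i : Fin t.1 => S ⟨i.1, i.2.trans t.2⟩ ω) = v)
        ≥ ρ t u) ∧
      (cexp p (S t)
          (fun ω => Ubar ω = u ∧ (fun i : Fin t.1 => S ⟨i.1, i.2.trans t.2⟩ ω) = v)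
        ≥ if h : 0 < t.1 then v ⟨t.1 - 1, by omega⟩ else 0) := by
  intro t v u hpos
  have hπ : ρ t u ≤ cexp p (fun ω => π (X t ω) (Y t ω) (Zstar t ω))
      (fun ω => Ubar ω = u ∧ (fun i : Fin t.1 => S ⟨i.1, i.2.trans t.2⟩ ω) = v) := by
    have hρz : ∀ b : ℳ × (Fin t.1 → 𝒲), ρ t u ≤ cexp p (fun ω => π (X t ω) (Y t ω) (z t b.1 b.2))
        (fun ω => Ubar ω = u) := fun b => by
      rw [hρ t u]
      exact ciInf_le (Set.finite_range _).bddBelow _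
    have h := le_cexp_of_isMarkovChain p hp (fun ω => (X t ω, Y t ω)) Ubar
      (fun ω (i : Fin t.1) => S ⟨i.1, i.2.trans t.2⟩ ω)
      (fun ω => (M ω, fun (i : Fin t.1) => W ⟨i.1, i.2.trans t.2⟩ ω))
      -- `convert` only reconciles the classical `Decidable` instances of the events
      (fun a c b => by convert hMC1 t a c b) (fun a c b => by convert hMC2 t a c b)
      (by convert hpos using 2) (fun a b => π a.1 a.2 (z t b.1 b.2)) _ hρz
    rw [cexp_congr p _ fun ω _ => by rw [hZ t ω]]
    convert h using 2
  refine ⟨hπ, ?_⟩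
  have hSt : ∀ ω, Ubar ω = u ∧ (fun i : Fin t.1 => S ⟨i.1, i.2.trans t.2⟩ ω) = v →
      S t ω = π (X t ω) (Y t ω) (Zstar t ω)
        + ((if h : 0 < t.1 then v ⟨t.1 - 1, by omega⟩ else 0) - ρ t u) := by
    rintro ω ⟨rfl, rfl⟩
    rw [hS, Fin.sum_filter_le_eq_add_pred]
    split_ifs
    · beta_reduce
      rw [hS]
      ring
    · ring
  rw [cexp_congr p _ hSt, cexp_add_const p _ _ _ hpos.ne']
  linarith
end
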